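/- arXiv:2004.05567 — 6 statements merged into one kernel-verified Lean document; each statement's English description precedes it below -/
import Mathlib

section
/- Let n ∈ ℕ with n ≥ 2, let p ∈ (0,2] and let λ > (n+p-2)/n. Then there exist x ∈ ℝⁿ with |x| = 1 and a ∈ (0,∞) such that ∫_{S^{n-1}} |x - a z|^p dσ(z) < (|x|² + λ a²)^{p/2}; that is, (n+p-2)/n is the largest constant λ for which the inequality ∫_{S^{n-1}} |x - a z|^p dσ(z) ≥ (|x|² + λ a²)^{p/2} holds for all x ∈ ℝⁿ and a ≥ 0. -/
/-!
Put `q = p / 2`. For unit vectors `x, z` and `t = ⟪x, z⟫` we have `|x - a z|^p = (1 + a² - 2at)^q`.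
On `(0, (1 + a)²]` the second derivative of `u ↦ u^q` is at most `-q(1 - q)(1 + a)^(2(q - 2))`, so
`(1 + a² - 2at)^q` lies below its tangent at `t = 0` minus `2q(1 - q)(1 + a)^(2(q - 2)) a² t²`.
Since the second moments `∫ ⟪e_i, z⟫²` of an orthonormal basis sum to `1`, some `x = ±e_i` has
`∫ ⟪x, z⟫ ≥ 0` and `∫ ⟪x, z⟫² ≥ 1/n`, which gives
`∫ |x - a z|^p ≤ (1 + a²)^q - 2q(1 - q)(1 + a)^(2(q - 2)) a² / n`.
By concavity `(1 + a²)^q - (1 + λa²)^q ≤ q(1 - λ)a²` for `λ ≤ 1`, and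
`n(1 - λ) < 2(1 - q)` is the hypothesis on `λ`, so the bound is below `(1 + λa²)^q` for small `a`.
-/

open MeasureTheory Metric

/-- The normalized rotation-invariant (Haar) probability measure `σ` on the unit
sphere `S^{n-1} ⊆ ℝⁿ`. -/
noncomputable def sphereHaar (n : ℕ) :
    Measure (sphere (0 : EuclideanSpace ℝ (Fin n)) 1) :=
  ((volume : Measure (EuclideanSpace ℝ (Fin n))).toSphere Set.univ)⁻¹ •
    (volume : Measure (EuclideanSpace ℝ (Fin n))).toSphere

open Real Set Filter Topology
open scoped RealInnerProductSpace

theorem ConcaveOn.le_add_mul_sub_of_hasDerivAt {S : Set ℝ} {f : ℝ → ℝ} {x y f' : ℝ}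
    (hf : ConcaveOn ℝ S f) (hx : x ∈ S) (hy : y ∈ S) (hf' : HasDerivAt f f' x) :
    f y ≤ f x + f' * (y - x) := by
  rcases lt_trichotomy x y with hxy | rfl | hyx
  · have := hf.slope_le_of_hasDerivAt hx hy hxy hf'
    rw [slope_def_field, div_le_iff₀ (sub_pos.2 hxy)] at this
    linarith
  · simp
  · have := hf.le_slope_of_hasDerivAt hy hx hyx hf'
    rw [slope_def_field, le_div_iff₀ (sub_pos.2 hyx)] at this
    linarith

theorem concaveOn_rpow_add_mul_sq {q M : ℝ} (hq0 : 0 ≤ q) (hq1 : q ≤ 1) :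
    ConcaveOn ℝ (Ioc 0 M) fun u => u ^ q + q * (1 - q) * M ^ (q - 2) / 2 * u ^ 2 := by
  set K := q * (1 - q) * M ^ (q - 2)
  refine concaveOn_of_hasDerivWithinAt2_nonpos (convex_Ioc 0 M)
    (f' := fun u => q * u ^ (q - 1) + K * u) (f'' := fun u => q * ((q - 1) * u ^ (q - 2)) + K)
    (fun u hu => ?_) (fun u hu => ?_) (fun u hu => ?_) (fun u hu => ?_)
  · exact ((continuousAt_id.rpow_const (.inl hu.1.ne')).add
      (continuousAt_const.mul (continuousAt_id.pow 2))).continuousWithinAt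
  all_goals rw [interior_Ioc] at hu
  · refine (((hasDerivAt_rpow_const (.inl hu.1.ne')).add
      ((hasDerivAt_pow 2 u).const_mul (K / 2))).congr_deriv ?_).hasDerivWithinAt
    ring
  · have h := (hasDerivAt_rpow_const (p := q - 1) (.inl hu.1.ne')).const_mul q
    rw [sub_sub, one_add_one_eq_two] at h
    exact (h.add ((hasDerivAt_id u).const_mul K)).hasDerivWithinAt.congr_deriv (by rw [mul_one])
  · have : M ^ (q - 2) ≤ u ^ (q - 2) := rpow_le_rpow_of_nonpos hu.1 hu.2.le (by linarith)
    nlinarith [mul_nonneg hq0 (sub_nonneg.2 hq1)]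

theorem rpow_le_tangent_sub_sq {q M u v : ℝ} (hq0 : 0 ≤ q) (hq1 : q ≤ 1) (hu : u ∈ Ioc 0 M)
    (hv : v ∈ Ioc 0 M) :
    u ^ q ≤ v ^ q + q * v ^ (q - 1) * (u - v) - q * (1 - q) * M ^ (q - 2) / 2 * (u - v) ^ 2 := by
  have hv' : HasDerivAt (fun u => u ^ q + q * (1 - q) * M ^ (q - 2) / 2 * u ^ 2)
      (q * v ^ (q - 1) + q * (1 - q) * M ^ (q - 2) / 2 * (2 * v)) v := by
    refine (hasDerivAt_rpow_const (.inl hv.1.ne')).add ((hasDerivAt_pow 2 v).const_mul _)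
      |>.congr_deriv ?_
    ring
  have := (concaveOn_rpow_add_mul_sq (M := M) hq0 hq1).le_add_mul_sub_of_hasDerivAt hv hu hv'
  linarith

theorem rpow_sub_rpow_le_mul_sub {q u v : ℝ} (hq0 : 0 ≤ q) (hq1 : q ≤ 1) (hu : 1 ≤ u)
    (huv : u ≤ v) : v ^ q - u ^ q ≤ q * (v - u) := by
  have hu0 : 0 < u := by linarith
  have htangent := (concaveOn_rpow hq0 hq1).le_add_mul_sub_of_hasDerivAt hu0.le
    (hu0.le.trans huv) (hasDerivAt_rpow_const (.inl hu0.ne'))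
  have : u ^ (q - 1) ≤ 1 := rpow_le_one_of_one_le_of_nonpos hu (by linarith)
  nlinarith [mul_le_mul_of_nonneg_left this hq0]

theorem one_add_sq_sub_rpow_le {q a t : ℝ} (hq0 : 0 ≤ q) (hq1 : q ≤ 1) (ha0 : 0 < a)
    (ha1 : a < 1) (ht : |t| ≤ 1) :
    (1 + a ^ 2 - 2 * a * t) ^ q ≤ (1 + a ^ 2) ^ q - 2 * a * q * (1 + a ^ 2) ^ (q - 1) * t
      - 2 * q * (1 - q) * ((1 + a) ^ 2) ^ (q - 2) * a ^ 2 * t ^ 2 := by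
  obtain ⟨ht1, ht2⟩ := abs_le.1 ht
  have := rpow_le_tangent_sub_sq (M := (1 + a) ^ 2) (u := 1 + a ^ 2 - 2 * a * t) (v := 1 + a ^ 2)
    hq0 hq1 ⟨by nlinarith, by nlinarith⟩ ⟨by positivity, by nlinarith⟩
  linarith

theorem integral_one_add_sq_sub_rpow_le {α : Type*} [MeasurableSpace α] {μ : Measure α}
    [IsProbabilityMeasure μ] {t : α → ℝ} {q a m : ℝ} (hq0 : 0 ≤ q) (hq1 : q ≤ 1) (ha0 : 0 < a)
    (ha1 : a < 1) (htm : AEStronglyMeasurable t μ) (ht : ∀ z, |t z| ≤ 1)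
    (hmean : 0 ≤ ∫ z, t z ∂μ) (hsq : m ≤ ∫ z, t z ^ 2 ∂μ) :
    ∫ z, (1 + a ^ 2 - 2 * a * t z) ^ q ∂μ ≤
      (1 + a ^ 2) ^ q - 2 * q * (1 - q) * ((1 + a) ^ 2) ^ (q - 2) * a ^ 2 * m := by
  set B := 2 * a * q * (1 + a ^ 2) ^ (q - 1)
  set C := 2 * q * (1 - q) * ((1 + a) ^ 2) ^ (q - 2) * a ^ 2
  have hB : 0 ≤ B := by positivity
  have hC : 0 ≤ C := by have := sub_nonneg.2 hq1; positivity
  have ht_int : Integrable t μ := .of_bound htm 1 (.of_forall fun z => ht z)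
  have ht2_int : Integrable (fun z => t z ^ 2) μ :=
    .of_bound (htm.pow 2) 1
      (.of_forall fun z => by simpa using (sq_le_one_iff_abs_le_one _).2 (ht z))
  calc ∫ z, (1 + a ^ 2 - 2 * a * t z) ^ q ∂μ
      ≤ ∫ z, ((1 + a ^ 2) ^ q - B * t z - C * t z ^ 2) ∂μ :=
        integral_mono_of_nonneg
          (.of_forall fun z => rpow_nonneg (by nlinarith [abs_le.1 (ht z)]) q)
          (((integrable_const _).sub (ht_int.const_mul B)).sub (ht2_int.const_mul C))
          (.of_forall fun z => one_add_sq_sub_rpow_le hq0 hq1 ha0 ha1 (ht z))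
    _ = (1 + a ^ 2) ^ q - B * ∫ z, t z ∂μ - C * ∫ z, t z ^ 2 ∂μ := by
        rw [integral_sub, integral_sub, integral_const_mul, integral_const_mul, integral_const,
          probReal_univ, one_smul]
        all_goals fun_prop
    _ ≤ (1 + a ^ 2) ^ q - C * m := by
        nlinarith [mul_nonneg hB hmean, mul_le_mul_of_nonneg_left hsq hC]

theorem exists_rpow_one_add_sq_sub_lt {d q lam : ℝ} (hd : 0 < d) (hq0 : 0 < q) (hq1 : q ≤ 1)
    (hlam0 : 0 ≤ lam) (hlam : d * (1 - lam) < 2 * (1 - q)) :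
    ∃ a, 0 < a ∧ a < 1 ∧
      (1 + a ^ 2) ^ q - 2 * q * (1 - q) * ((1 + a) ^ 2) ^ (q - 2) * a ^ 2 / d <
        (1 + lam * a ^ 2) ^ q := by
  rcases lt_or_ge 1 lam with hlam1 | hlam1
  · refine ⟨1 / 2, by norm_num, by norm_num, ?_⟩
    have : (1 + (1 / 2 : ℝ) ^ 2) ^ q < (1 + lam * (1 / 2) ^ 2) ^ q :=
      rpow_lt_rpow (by positivity) (by nlinarith) hq0
    have := sub_nonneg.2 hq1
    have : 0 ≤ 2 * q * (1 - q) * ((1 + 1 / 2 : ℝ) ^ 2) ^ (q - 2) * (1 / 2) ^ 2 / d := by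
      positivity
    linarith
  have hlim : Tendsto (fun a : ℝ => 2 * (1 - q) * ((1 + a) ^ 2) ^ (q - 2)) (𝓝[>] 0)
      (𝓝 (2 * (1 - q))) := by
    have : ContinuousAt (fun a : ℝ => 2 * (1 - q) * ((1 + a) ^ 2) ^ (q - 2)) 0 :=
      continuousAt_const.mul ((continuousAt_const.add continuousAt_id).pow 2 |>.rpow_const
        (.inl (by norm_num)))
    simpa using this.tendsto.mono_left nhdsWithin_le_nhds
  obtain ⟨a, hdec, ha0, ha1⟩ :=
    ((hlim.eventually_const_lt hlam).and (Ioo_mem_nhdsGT one_pos)).exists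
  refine ⟨a, ha0, ha1, ?_⟩
  have hconcave := rpow_sub_rpow_le_mul_sub hq0.le hq1 (u := 1 + lam * a ^ 2) (v := 1 + a ^ 2)
    (le_add_of_nonneg_right (by positivity)) (by nlinarith)
  have hqa : 0 < q * a ^ 2 := by positivity
  have : q * (1 - lam) * a ^ 2 < 2 * q * (1 - q) * ((1 + a) ^ 2) ^ (q - 2) * a ^ 2 / d := by
    rw [lt_div_iff₀ hd]
    nlinarith [mul_lt_mul_of_pos_left hdec hqa]
  linarith

instance {n : ℕ} [NeZero n] : IsProbabilityMeasure (sphereHaar n) :=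
  have : NeZero (volume : Measure (EuclideanSpace ℝ (Fin n))).toSphere :=
    ⟨Measure.toSphere_ne_zero _⟩
  isProbabilityMeasureSMul

section Sphere

variable {E : Type*} [NormedAddCommGroup E] [InnerProductSpace ℝ E] [FiniteDimensional ℝ E]
  [MeasurableSpace E] [BorelSpace E] (μ : Measure (sphere (0 : E) 1)) [IsProbabilityMeasure μ]

theorem exists_norm_eq_one_inv_finrank_le_integral_inner_sq :
    ∃ x : E, ‖x‖ = 1 ∧ 1 / (Module.finrank ℝ E : ℝ) ≤ ∫ z, ⟪x, (z : E)⟫ ^ 2 ∂μ := by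
  set b := stdOrthonormalBasis ℝ E
  have hsum : ∑ i, ∫ z, ⟪b i, (z : E)⟫ ^ 2 ∂μ = 1 := by
    rw [← integral_finsetSum _ fun i _ => ((continuous_const.inner continuous_subtype_val).pow
      2).integrable_of_hasCompactSupport (.of_compactSpace _)]
    have (z : sphere (0 : E) 1) : ∑ i, ⟪b i, (z : E)⟫ ^ 2 = 1 := by
      simpa [sq_abs] using b.sum_sq_norm_inner_right z
    simp [this]
  have hne : (Finset.univ : Finset (Fin (Module.finrank ℝ E))).Nonempty := by
    by_contra h
    simp [Finset.not_nonempty_iff_eq_empty.1 h] at hsum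
  obtain ⟨i, -, hi⟩ := Finset.exists_le_of_sum_le hne
    (f := fun _ => 1 / (Module.finrank ℝ E : ℝ)) (g := fun i => ∫ z, ⟪b i, (z : E)⟫ ^ 2 ∂μ) (by
      have : (Module.finrank ℝ E : ℝ) ≠ 0 := by simpa using hne.card_pos.ne'
      simp [hsum, this])
  exact ⟨b i, b.orthonormal.1 i, hi⟩

theorem exists_norm_eq_one_integral_inner_nonneg :
    ∃ x : E, ‖x‖ = 1 ∧ 0 ≤ ∫ z, ⟪x, (z : E)⟫ ∂μ ∧
      1 / (Module.finrank ℝ E : ℝ) ≤ ∫ z, ⟪x, (z : E)⟫ ^ 2 ∂μ := by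
  obtain ⟨x, hx, hsq⟩ := exists_norm_eq_one_inv_finrank_le_integral_inner_sq μ
  rcases le_total 0 (∫ z, ⟪x, (z : E)⟫ ∂μ) with hmean | hmean
  · exact ⟨x, hx, hmean, hsq⟩
  · exact ⟨-x, by rwa [norm_neg], by simpa [integral_neg] using hmean, by simpa using hsq⟩

end Sphere

theorem norm_sub_smul_sq_of_norm_eq_one {E : Type*} [NormedAddCommGroup E]
    [InnerProductSpace ℝ E] {x z : E} (hx : ‖x‖ = 1) (hz : ‖z‖ = 1) (a : ℝ) :
    ‖x - a • z‖ ^ 2 = 1 + a ^ 2 - 2 * a * ⟪x, z⟫ := by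
  rw [norm_sub_sq_real, real_inner_smul_right, norm_smul, hx, hz, Real.norm_eq_abs, mul_one,
    sq_abs]
  ring

theorem stmt_1 (n : ℕ) (hn : 2 ≤ n) (p : ℝ) (hp : p ∈ Set.Ioc (0 : ℝ) 2) (lam : ℝ)
    (hlam : ((n : ℝ) + p - 2) / n < lam) :
    ∃ (x : EuclideanSpace ℝ (Fin n)) (a : ℝ), ‖x‖ = 1 ∧ 0 < a ∧
      ∫ z : sphere (0 : EuclideanSpace ℝ (Fin n)) 1,
          ‖x - a • (z : EuclideanSpace ℝ (Fin n))‖ ^ p ∂(sphereHaar n) <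
        (‖x‖ ^ 2 + lam * a ^ 2) ^ (p / 2) := by
  obtain ⟨hp0, hp2⟩ := hp
  have : NeZero n := ⟨by omega⟩
  have hn2 : (2 : ℝ) ≤ n := by exact_mod_cast hn
  have hn0 : (0 : ℝ) < n := by positivity
  have hlam0 : 0 ≤ lam := (div_nonneg (by linarith) hn0.le).trans hlam.le
  have hlam' : n * (1 - lam) < 2 * (1 - p / 2) := by
    rw [div_lt_iff₀ hn0] at hlam
    linarith
  obtain ⟨x, hx, hmean, hsq⟩ := exists_norm_eq_one_integral_inner_nonneg (sphereHaar n)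
  rw [finrank_euclideanSpace_fin] at hsq
  obtain ⟨a, ha0, ha1, ha⟩ :=
    exists_rpow_one_add_sq_sub_lt hn0 (by linarith) (by linarith) hlam0 hlam'
  refine ⟨x, a, hx, ha0, ?_⟩
  have hnorm (z : sphere (0 : EuclideanSpace ℝ (Fin n)) 1) :
      ‖x - a • (z : EuclideanSpace ℝ (Fin n))‖ ^ p = (1 + a ^ 2 - 2 * a * ⟪x, z⟫) ^ (p / 2) := by
    rw [← norm_sub_smul_sq_of_norm_eq_one hx (norm_eq_of_mem_sphere z) a, ← rpow_natCast,
      ← rpow_mul (norm_nonneg _)]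
    ring_nf
  have hinner (z : sphere (0 : EuclideanSpace ℝ (Fin n)) 1) :
      |⟪x, (z : EuclideanSpace ℝ (Fin n))⟫| ≤ 1 := by
    simpa [hx, norm_eq_of_mem_sphere z] using abs_real_inner_le_norm x z
  calc _ = ∫ z : sphere (0 : EuclideanSpace ℝ (Fin n)) 1,
          (1 + a ^ 2 - 2 * a * ⟪x, z⟫) ^ (p / 2) ∂sphereHaar n :=
        integral_congr_ae (.of_forall hnorm)
    _ ≤ _ := integral_one_add_sq_sub_rpow_le (by linarith) (by linarith) ha0 ha1
        (continuous_const.inner continuous_subtype_val).aestronglyMeasurable hinner hmean hsq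
    _ < _ := by rwa [mul_one_div]
    _ = _ := by rw [hx, one_pow]
end

section
/- Let p ∈ (0,1] and a ∈ [0,∞). Then 1 + p(p+1) ∫₀^a ∫₀^t t^{-2} u² max{1,u}^{p-2} du dt equals 1 + (p(p+1)/6) a² if a ∈ [0,1], and equals a^p + p(2-p)/(3a) + p(p-1)/2 if a > 1. -/
/-!
Write `F(t) = ∫₀^t u² max(1,u)^(p-2) du`, so that the inner integral is `t⁻² F(t)`.
For `t ≤ 1` the weight `max(1,u)^(p-2)` is `1`, so `F(t) = t³/3` and the inner integral is `t/3`.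
For `t ≥ 1` the integral over `[1,t]` is `∫ u^p`, giving `F(t) = 1/3 + (t^(p+1) - 1)/(p+1)`;
the inner integral is then a combination of `t⁻²` and `t^(p-1)`, which integrate explicitly
over `[1,a]`.
-/

open intervalIntegral Set

theorem integral_sq_mul_max_one_rpow_of_le_one (p : ℝ) {t : ℝ} (ht : t ≤ 1) :
    ∫ u in (0 : ℝ)..t, u ^ 2 * (max 1 u) ^ (p - 2) = t ^ 3 / 3 := by
  have hmax : EqOn (fun u : ℝ => u ^ 2 * (max 1 u) ^ (p - 2)) (fun u => u ^ 2) (uIcc 0 t) := by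
    intro u hu
    have hu1 : u ≤ 1 := hu.2.trans (max_le zero_le_one ht)
    simp [max_eq_left hu1]
  rw [integral_congr hmax, integral_pow]
  ring

theorem integral_sq_mul_max_one_rpow_of_one_le {p : ℝ} (hp : p ≠ -1) {t : ℝ} (ht : 1 ≤ t) :
    ∫ u in (0 : ℝ)..t, u ^ 2 * (max 1 u) ^ (p - 2) = 1 / 3 + (t ^ (p + 1) - 1) / (p + 1) := by
  have hcont : Continuous fun u : ℝ => u ^ 2 * (max 1 u) ^ (p - 2) :=
    (continuous_pow 2).mul <|
      (continuous_const.max continuous_id).rpow_const fun u => Or.inl (by positivity)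
  have hrpow : EqOn (fun u : ℝ => u ^ 2 * (max 1 u) ^ (p - 2)) (fun u => u ^ p) (uIcc 1 t) := by
    intro u hu
    rw [uIcc_of_le ht] at hu
    have hu0 : 0 < u := one_pos.trans_le hu.1
    simp only
    rw [max_eq_right hu.1, ← Real.rpow_natCast u 2, ← Real.rpow_add hu0]
    norm_num
  have hp' : p + 1 ≠ 0 := fun h => hp (by linarith)
  rw [← integral_add_adjacent_intervals (hcont.intervalIntegrable 0 1)
      (hcont.intervalIntegrable 1 t), integral_sq_mul_max_one_rpow_of_le_one p le_rfl,
    integral_congr hrpow, integral_rpow (Or.inr ⟨hp, by simp [uIcc_of_le ht]⟩), Real.one_rpow]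
  norm_num

theorem integral_zpow_neg_two_mul_sq_mul_max_one_rpow_of_le_one (p : ℝ) {t : ℝ} (ht : t ≤ 1) :
    ∫ u in (0 : ℝ)..t, t ^ (-2 : ℤ) * u ^ 2 * (max 1 u) ^ (p - 2) = t / 3 := by
  simp only [mul_assoc, integral_const_mul, integral_sq_mul_max_one_rpow_of_le_one p ht]
  rcases eq_or_ne t 0 with rfl | ht0
  · simp
  · field_simp

theorem integral_zpow_neg_two_mul_sq_mul_max_one_rpow_of_one_le {p : ℝ} (hp : p ≠ -1) {t : ℝ}
    (ht : 1 ≤ t) :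
    ∫ u in (0 : ℝ)..t, t ^ (-2 : ℤ) * u ^ 2 * (max 1 u) ^ (p - 2) =
      (1 / 3 - 1 / (p + 1)) * t ^ (-2 : ℝ) + t ^ (p - 1) / (p + 1) := by
  have ht0 : 0 < t := one_pos.trans_le ht
  have hp' : p + 1 ≠ 0 := fun h => hp (by linarith)
  have hzpow : t ^ (-2 : ℤ) = t ^ (-2 : ℝ) := by
    rw [← Real.rpow_intCast]
    norm_num
  have hsplit : t ^ (p - 1) = t ^ (-2 : ℝ) * t ^ (p + 1) := by
    rw [← Real.rpow_add ht0]
    ring_nf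
  simp only [mul_assoc, integral_const_mul, integral_sq_mul_max_one_rpow_of_one_le hp ht]
  rw [hzpow, hsplit]
  field_simp
  ring

theorem integral_integral_zpow_neg_two_mul_sq_mul_max_one_rpow_of_le_one (p : ℝ) {a : ℝ}
    (ha : a ≤ 1) :
    ∫ t in (0 : ℝ)..a, ∫ u in (0 : ℝ)..t, t ^ (-2 : ℤ) * u ^ 2 * (max 1 u) ^ (p - 2) =
      a ^ 2 / 6 := by
  have hinner :
      EqOn (fun t : ℝ => ∫ u in (0 : ℝ)..t, t ^ (-2 : ℤ) * u ^ 2 * (max 1 u) ^ (p - 2))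
        (fun t => t / 3) (uIcc 0 a) := fun t ht =>
    integral_zpow_neg_two_mul_sq_mul_max_one_rpow_of_le_one p (ht.2.trans (max_le zero_le_one ha))
  rw [integral_congr hinner, integral_div, integral_id]
  ring

theorem integral_integral_zpow_neg_two_mul_sq_mul_max_one_rpow_of_one_le {p : ℝ} (hp0 : p ≠ 0)
    (hp : p ≠ -1) {a : ℝ} (ha : 1 ≤ a) :
    ∫ t in (0 : ℝ)..a, ∫ u in (0 : ℝ)..t, t ^ (-2 : ℤ) * u ^ 2 * (max 1 u) ^ (p - 2) =
      1 / 6 + (1 / 3 - 1 / (p + 1)) * (1 - a⁻¹) + (a ^ p - 1) / (p * (p + 1)) := by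
  set g := fun t : ℝ => ∫ u in (0 : ℝ)..t, t ^ (-2 : ℤ) * u ^ 2 * (max 1 u) ^ (p - 2)
  have hp' : p + 1 ≠ 0 := fun h => hp (by linarith)
  have h0 : (0 : ℝ) ∉ uIcc 1 a := by simp [uIcc_of_le ha]
  have hg_le_one : EqOn (fun t => t / 3) g (uIcc 0 1) := fun t ht =>
    (integral_zpow_neg_two_mul_sq_mul_max_one_rpow_of_le_one p (by simpa using ht.2)).symm
  have hg_one_le :
      EqOn (fun t => (1 / 3 - 1 / (p + 1)) * t ^ (-2 : ℝ) + t ^ (p - 1) / (p + 1)) g (uIcc 1 a) :=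
    fun t ht => (integral_zpow_neg_two_mul_sq_mul_max_one_rpow_of_one_le hp
      ((le_min le_rfl ha).trans ht.1)).symm
  have hint₁ : IntervalIntegrable (fun t : ℝ => (1 / 3 - 1 / (p + 1)) * t ^ (-2 : ℝ))
      MeasureTheory.volume 1 a :=
    (intervalIntegrable_rpow (Or.inr h0)).const_mul _
  have hint₂ :
      IntervalIntegrable (fun t : ℝ => t ^ (p - 1) / (p + 1)) MeasureTheory.volume 1 a :=
    (intervalIntegrable_rpow (Or.inr h0)).div_const _
  have h01 : ∫ t in (0 : ℝ)..1, g t = 1 / 6 := by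
    rw [← integral_congr hg_le_one, integral_div, integral_id]
    norm_num
  have h1a : ∫ t in (1 : ℝ)..a, g t =
      (1 / 3 - 1 / (p + 1)) * (1 - a⁻¹) + (a ^ p - 1) / (p * (p + 1)) := by
    rw [← integral_congr hg_one_le, integral_add hint₁ hint₂, integral_const_mul,
      integral_div, integral_rpow (Or.inr ⟨by norm_num, h0⟩),
      integral_rpow (Or.inr ⟨by simpa using hp0, h0⟩)]
    norm_num [Real.rpow_neg_one]
    field_simp
    ring
  rw [← integral_add_adjacent_intervals
      ((continuous_id.div_const 3).intervalIntegrable 0 1 |>.congr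
        (hg_le_one.mono uIoc_subset_uIcc))
      ((hint₁.add hint₂).congr (hg_one_le.mono uIoc_subset_uIcc)), h01, h1a]
  ring

theorem stmt_5_general (p : ℝ) (hp : p ∈ Set.Ioc (0 : ℝ) 1) (a : ℝ) :
    (a ≤ 1 →
      1 + p * (p + 1) *
          ∫ t in (0 : ℝ)..a, ∫ u in (0 : ℝ)..t, t ^ (-2 : ℤ) * u ^ 2 * (max 1 u) ^ (p - 2) =
        1 + p * (p + 1) / 6 * a ^ 2) ∧
    (1 < a →
      1 + p * (p + 1) *
          ∫ t in (0 : ℝ)..a, ∫ u in (0 : ℝ)..t, t ^ (-2 : ℤ) * u ^ 2 * (max 1 u) ^ (p - 2) =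
        a ^ p + p * (2 - p) / (3 * a) + p * (p - 1) / 2) := by
  have hp0 : p ≠ 0 := hp.1.ne'
  have hp1 : p + 1 ≠ 0 := by linarith [hp.1]
  refine ⟨fun ha => ?_, fun ha => ?_⟩
  · rw [integral_integral_zpow_neg_two_mul_sq_mul_max_one_rpow_of_le_one p ha]
    ring
  · rw [integral_integral_zpow_neg_two_mul_sq_mul_max_one_rpow_of_one_le hp0
      (by linarith [hp.1]) ha.le]
    field_simp
    ring

theorem stmt_5 (p : ℝ) (hp : p ∈ Set.Ioc (0 : ℝ) 1) (a : ℝ) (ha : 0 ≤ a) :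
    (a ≤ 1 →
      1 + p * (p + 1) *
          ∫ t in (0 : ℝ)..a, ∫ u in (0 : ℝ)..t, t ^ (-2 : ℤ) * u ^ 2 * (max 1 u) ^ (p - 2) =
        1 + p * (p + 1) / 6 * a ^ 2) ∧
    (1 < a →
      1 + p * (p + 1) *
          ∫ t in (0 : ℝ)..a, ∫ u in (0 : ℝ)..t, t ^ (-2 : ℤ) * u ^ 2 * (max 1 u) ^ (p - 2) =
        a ^ p + p * (2 - p) / (3 * a) + p * (p - 1) / 2) :=
  stmt_5_general p hp a
end

section
/- Let p ∈ (0,1], let x ∈ ℝ³ with |x| = 1 and let a ∈ [0,∞). Then ∫_{S²} |x - a z|^p dσ(z) ≥ 1 + (p(p+1)/6) a² if a ≤ 1, and ∫_{S²} |x - a z|^p dσ(z) ≥ a^p + p(2-p)/(3a) - p(1-p)/2 if a > 1. -/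
/-!
Since `‖x - a z‖² = 1 + a² - 2a⟪x, z⟫`, the integral only depends on the law of `⟪x, z⟫` under `σ`,
which is uniform on `[-1, 1]` (Archimedes). Indeed `y ↦ (⟪x, y⟫, ‖y‖²)` pushes Lebesgue measure
on `ℝ³` forward to `π` times Lebesgue measure on `{(t, R) | t² ≤ R}` (Fubini over the line `ℝ x`
and the plane orthogonal to it), so the cone `{0 < ‖y‖ < 1, ⟪x, y⟫ ≤ s ‖y‖}`, whose volume is a
third of the unnormalized measure of `{⟪x, z⟫ ≤ s}`, has volume `(2π/3)(1 + s)` for `|s| ≤ 1`.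

The integral is then `((1 + a)^(p+2) - |1 - a|^(p+2)) / (2a(p+2))`, and both bounds are
one-variable inequalities, proved by differentiating in `a` until convexity of `u ↦ u^(p-1)`
applies. For `a > 1` the values at `a = 1` leave `p² + p + 2 ≤ 2^(p+1)` and
`2p + 4 + p(p+1)(p+2)/3 ≤ 2^(p+2)` on `[0, 1]`; the differences are concave since
`(log 2)² < 1/2`, and vanish at both ends.
-/

open MeasureTheory Metric

open Set Real
open scoped RealInnerProductSpace Pointwise

local notation "ℝ²" => EuclideanSpace ℝ (Fin 2)
local notation "ℝ³" => EuclideanSpace ℝ (Fin 3)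

instance isProbabilityMeasure_sphereHaar (n : ℕ) [NeZero n] :
    IsProbabilityMeasure (sphereHaar n) where
  measure_univ := by
    have : (volume : Measure (EuclideanSpace ℝ (Fin n))).toSphere univ ≠ 0 := by
      simp [NeZero.ne n, (measure_ball_pos volume (0 : EuclideanSpace ℝ (Fin n)) one_pos).ne']
    rw [sphereHaar, Measure.smul_apply, smul_eq_mul]
    exact ENNReal.inv_mul_cancel this (measure_ne_top _ _)

lemma volume_setOf_norm_sq_le_fin_two (b : ℝ) :
    volume {w : ℝ² | ‖w‖ ^ 2 ≤ b} = ENNReal.ofReal π * volume (Icc 0 b) := by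
  rcases lt_or_ge b 0 with hb | hb
  · have : {w : ℝ² | ‖w‖ ^ 2 ≤ b} = ∅ :=
      eq_empty_of_forall_notMem fun w hw => hb.not_ge ((sq_nonneg _).trans hw)
    simp [this, Icc_eq_empty_of_lt hb]
  · have : {w : ℝ² | ‖w‖ ^ 2 ≤ b} = closedBall 0 √b := by
      ext w
      simp [Real.le_sqrt (norm_nonneg w) hb]
    rw [this, EuclideanSpace.volume_closedBall_fin_two, Real.volume_Icc, sub_zero,
      ← ENNReal.ofReal_pow (Real.sqrt_nonneg b), Real.sq_sqrt hb, mul_comm]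

lemma map_norm_sq_volume_fin_two :
    (volume : Measure ℝ²).map (fun w => ‖w‖ ^ 2) =
      ENNReal.ofReal π • volume.restrict (Ici 0) := by
  have hmeas : Measurable fun w : ℝ² => ‖w‖ ^ 2 := by fun_prop
  have hIic (b : ℝ) : (volume : Measure ℝ²).map (fun w => ‖w‖ ^ 2) (Iic b) =
      (ENNReal.ofReal π • volume.restrict (Ici 0)) (Iic b) := by
    rw [Measure.map_apply hmeas measurableSet_Iic, Measure.smul_apply,
      Measure.restrict_apply measurableSet_Iic, Iic_inter_Ici, smul_eq_mul]
    exact volume_setOf_norm_sq_le_fin_two b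
  have hfin (b : ℝ) : (ENNReal.ofReal π • volume.restrict (Ici (0 : ℝ))) (Iic b) ≠ ⊤ := by
    rw [Measure.smul_apply, Measure.restrict_apply measurableSet_Iic, Iic_inter_Ici,
      smul_eq_mul]
    exact ENNReal.mul_ne_top ENNReal.ofReal_ne_top measure_Icc_lt_top.ne
  refine (Measure.ext_of_Ioc' _ _ (fun a b _ => ?_) fun a b hab => ?_).symm
  · exact ne_top_of_le_ne_top (hfin b) (measure_mono Ioc_subset_Iic_self)
  · rw [← Iic_sdiff_Iic, measure_sdiff (Iic_subset_Iic.2 hab.le) measurableSet_Iic.nullMeasurableSet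
      (hfin a), measure_sdiff (Iic_subset_Iic.2 hab.le) measurableSet_Iic.nullMeasurableSet
      (hIic a ▸ hfin a), hIic, hIic]

lemma volume_preimage_norm_sq_fin_two {T : Set ℝ} (hT : MeasurableSet T) :
    volume {w : ℝ² | ‖w‖ ^ 2 ∈ T} = ENNReal.ofReal π * volume (T ∩ Ici 0) := by
  have := congrArg (· T) map_norm_sq_volume_fin_two
  rwa [Measure.map_apply (by fun_prop : Measurable fun w : ℝ² => ‖w‖ ^ 2) hT,
    Measure.smul_apply, Measure.restrict_apply hT, smul_eq_mul] at this

noncomputable def splitHead : ℝ³ ≃ᵐ ℝ × ℝ² :=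
  ((MeasurableEquiv.toLp 2 (Fin 3 → ℝ)).symm.trans
    (MeasurableEquiv.piFinSuccAbove (fun _ : Fin 3 => ℝ) 0)).trans
    ((MeasurableEquiv.refl ℝ).prodCongr (MeasurableEquiv.toLp 2 (Fin 2 → ℝ)))

lemma measurePreserving_splitHead : MeasurePreserving splitHead :=
  ((MeasurePreserving.id volume).prod
      (EuclideanSpace.volume_preserving_symm_measurableEquiv_toLp (Fin 2)).symm).comp
    ((volume_preserving_piFinSuccAbove (fun _ : Fin 3 => ℝ) 0).comp
      (EuclideanSpace.volume_preserving_symm_measurableEquiv_toLp (Fin 3)))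

lemma norm_sq_eq_splitHead (y : ℝ³) : ‖y‖ ^ 2 = y 0 ^ 2 + ‖(splitHead y).2‖ ^ 2 := by
  have h1 : (splitHead y).2 0 = y 1 := rfl
  have h2 : (splitHead y).2 1 = y 2 := rfl
  simp only [EuclideanSpace.norm_sq_eq, Fin.sum_univ_three, Fin.sum_univ_two, Real.norm_eq_abs,
    sq_abs, h1, h2]
  ring

lemma volume_preimage_coord_zero_norm_sq {A : Set (ℝ × ℝ)} (hA : MeasurableSet A) :
    volume {y : ℝ³ | (y 0, ‖y‖ ^ 2) ∈ A} =
      ENNReal.ofReal π * volume (A ∩ {q | q.1 ^ 2 ≤ q.2}) := by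
  have hB : MeasurableSet {q : ℝ × ℝ² | (q.1, q.1 ^ 2 + ‖q.2‖ ^ 2) ∈ A} :=
    (by fun_prop : Measurable fun q : ℝ × ℝ² => (q.1, q.1 ^ 2 + ‖q.2‖ ^ 2)) hA
  have hpre : {y : ℝ³ | (y 0, ‖y‖ ^ 2) ∈ A} =
      splitHead ⁻¹' {q : ℝ × ℝ² | (q.1, q.1 ^ 2 + ‖q.2‖ ^ 2) ∈ A} := by
    ext y
    simp only [mem_ofPred_eq, mem_preimage, norm_sq_eq_splitHead]
    rfl
  have hslice (t : ℝ) : volume (Prod.mk t ⁻¹' {q : ℝ × ℝ² | (q.1, q.1 ^ 2 + ‖q.2‖ ^ 2) ∈ A}) =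
      ENNReal.ofReal π * volume (Prod.mk t ⁻¹' (A ∩ {q | q.1 ^ 2 ≤ q.2})) := by
    have hT : MeasurableSet ((t ^ 2 + ·) ⁻¹' (Prod.mk t ⁻¹' A)) :=
      measurable_const_add _ (measurable_prodMk_left hA)
    have := volume_preimage_norm_sq_fin_two hT
    simp only [mem_preimage] at this
    rw [preimage_ofPred_eq, this,
      ← measure_preimage_add _ (t ^ 2) (Prod.mk t ⁻¹' (A ∩ {q | q.1 ^ 2 ≤ q.2}))]
    congr 2
    ext u
    simp
  rw [hpre, measurePreserving_splitHead.measure_preimage hB.nullMeasurableSet,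
    Measure.volume_eq_prod, Measure.volume_eq_prod, Measure.prod_apply hB,
    Measure.prod_apply (hA.inter (measurableSet_le (by fun_prop) (by fun_prop)))]
  simp_rw [hslice]
  exact lintegral_const_mul _ (measurable_measure_prodMk_left
    (hA.inter (measurableSet_le (by fun_prop) (by fun_prop))))

lemma volume_preimage_inner_norm_sq {x : ℝ³} (hx : ‖x‖ = 1) {A : Set (ℝ × ℝ)}
    (hA : MeasurableSet A) :
    volume {y : ℝ³ | (⟪x, y⟫, ‖y‖ ^ 2) ∈ A} =
      ENNReal.ofReal π * volume (A ∩ {q | q.1 ^ 2 ≤ q.2}) := by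
  set e : ℝ³ := EuclideanSpace.single 0 1
  set f := (ℝ ∙ (x - e))ᗮ.reflection
  have hfx : f x = e := Submodule.reflection_sub (by simp [e, hx])
  have hpre : {y : ℝ³ | (⟪x, y⟫, ‖y‖ ^ 2) ∈ A} = f ⁻¹' {y | (y 0, ‖y‖ ^ 2) ∈ A} := by
    ext y
    have : f y 0 = ⟪x, y⟫ := by
      rw [← f.inner_map_map, hfx, EuclideanSpace.inner_single_left]
      simp
    simp [this]
  have hB : MeasurableSet {y : ℝ³ | (y 0, ‖y‖ ^ 2) ∈ A} :=
    (by fun_prop : Measurable fun y : ℝ³ => (y 0, ‖y‖ ^ 2)) hA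
  rw [hpre, f.measurePreserving.measure_preimage hB.nullMeasurableSet,
    volume_preimage_coord_zero_norm_sq hA]

def coneProfile (s : ℝ) : Set (ℝ × ℝ) := {q | q.2 ∈ Ioo 0 1 ∧ q.1 ≤ s * √q.2}

lemma measurableSet_coneProfile (s : ℝ) : MeasurableSet (coneProfile s) :=
  (measurable_snd measurableSet_Ioo).inter
    (measurableSet_le (f := fun q : ℝ × ℝ => q.1) (by fun_prop) (by fun_prop))

lemma volume_cone_image (s : ℝ) :
    volume (coneProfile s ∩ {q | q.1 ^ 2 ≤ q.2}) = ENNReal.ofReal (2 / 3 * (1 + min s 1)) := by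
  have hmeas : MeasurableSet (coneProfile s ∩ {q | q.1 ^ 2 ≤ q.2}) :=
    (measurableSet_coneProfile s).inter (measurableSet_le (by fun_prop) (by fun_prop))
  have hslice (R : ℝ) : volume ((fun t => (t, R)) ⁻¹' (coneProfile s ∩ {q | q.1 ^ 2 ≤ q.2})) =
      (Ioo 0 1).indicator (fun R => ENNReal.ofReal (1 + min s 1) * ENNReal.ofReal √R) R := by
    by_cases hR : R ∈ Ioo (0 : ℝ) 1
    · have : (fun t => (t, R)) ⁻¹' (coneProfile s ∩ {q | q.1 ^ 2 ≤ q.2}) =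
          Icc (-√R) (min s 1 * √R) := by
        ext t
        simp only [coneProfile, mem_preimage, mem_inter_iff, mem_ofPred_eq, hR, true_and,
          Real.sq_le hR.1.le, mem_Icc, min_mul_of_nonneg _ _ (Real.sqrt_nonneg R), one_mul,
          le_min_iff]
        tauto
      rw [this, Real.volume_Icc, indicator_of_mem hR, ← ENNReal.ofReal_mul' (Real.sqrt_nonneg R)]
      ring_nf
    · have : (fun t => (t, R)) ⁻¹' (coneProfile s ∩ {q | q.1 ^ 2 ≤ q.2}) = ∅ := by
        ext t
        simp only [coneProfile, mem_preimage, mem_inter_iff, mem_ofPred_eq, hR, false_and, mem_empty_iff_false]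
      rw [this, indicator_of_notMem hR, measure_empty]
  have hsqrt : ∫ R in Ioo (0 : ℝ) 1, √R = 2 / 3 := by
    rw [← integral_Ioc_eq_integral_Ioo, ← intervalIntegral.integral_of_le zero_le_one]
    simp_rw [Real.sqrt_eq_rpow]
    rw [integral_rpow (by norm_num)]
    norm_num
  rw [Measure.volume_eq_prod, Measure.prod_apply_symm hmeas]
  simp_rw [hslice]
  rw [lintegral_indicator measurableSet_Ioo, lintegral_const_mul _ (by fun_prop),
    ← ofReal_integral_eq_lintegral_ofReal, hsqrt, ← ENNReal.ofReal_mul' (by norm_num), mul_comm]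
  · exact (continuous_sqrt.integrableOn_Icc (a := 0) (b := 1)).mono_set Ioo_subset_Icc_self
  · exact ae_of_all _ fun R => Real.sqrt_nonneg R

lemma volume_cone {x : ℝ³} (hx : ‖x‖ = 1) (s : ℝ) :
    volume {y : ℝ³ | 0 < ‖y‖ ∧ ‖y‖ < 1 ∧ ⟪x, y⟫ ≤ s * ‖y‖} =
      ENNReal.ofReal (2 * π / 3 * (1 + min s 1)) := by
  have hset : {y : ℝ³ | 0 < ‖y‖ ∧ ‖y‖ < 1 ∧ ⟪x, y⟫ ≤ s * ‖y‖} =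
      {y : ℝ³ | (⟪x, y⟫, ‖y‖ ^ 2) ∈ coneProfile s} := by
    ext y
    simp [coneProfile, sq_pos_iff, and_assoc]
  rw [hset, volume_preimage_inner_norm_sq hx (measurableSet_coneProfile s), volume_cone_image,
    ← ENNReal.ofReal_mul pi_pos.le]
  ring_nf

lemma Ioo_smul_setOf_inner_le (x : ℝ³) (s : ℝ) :
    Ioo (0 : ℝ) 1 • (Subtype.val '' {z : sphere (0 : ℝ³) 1 | ⟪x, (z : ℝ³)⟫ ≤ s}) =
      {y : ℝ³ | 0 < ‖y‖ ∧ ‖y‖ < 1 ∧ ⟪x, y⟫ ≤ s * ‖y‖} := by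
  ext y
  constructor
  · rintro ⟨r, ⟨hr0, hr1⟩, _, ⟨z, hz, rfl⟩, rfl⟩
    show 0 < ‖r • (z : ℝ³)‖ ∧ ‖r • (z : ℝ³)‖ < 1 ∧ ⟪x, r • (z : ℝ³)⟫ ≤ s * ‖r • (z : ℝ³)‖
    have hnorm : ‖r • (z : ℝ³)‖ = r := by simp [norm_smul, abs_of_pos hr0]
    rw [hnorm, inner_smul_right, mul_comm s]
    exact ⟨hr0, hr1, mul_le_mul_of_nonneg_left hz hr0.le⟩
  · rintro ⟨hy0, hy1, hys⟩
    refine ⟨‖y‖, ⟨hy0, hy1⟩, ‖y‖⁻¹ • y, ⟨⟨‖y‖⁻¹ • y, ?_⟩, ?_, rfl⟩, smul_inv_smul₀ hy0.ne' y⟩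
    · simp [norm_smul, hy0.ne']
    · show ⟪x, ‖y‖⁻¹ • y⟫ ≤ s
      rw [inner_smul_right, inv_mul_le_iff₀ hy0, mul_comm]
      exact hys

lemma toSphere_setOf_inner_le {x : ℝ³} (hx : ‖x‖ = 1) (s : ℝ) :
    (volume : Measure ℝ³).toSphere {z | ⟪x, (z : ℝ³)⟫ ≤ s} =
      ENNReal.ofReal (2 * π * (1 + min s 1)) := by
  rw [Measure.toSphere_apply' _ (measurableSet_le (by fun_prop) measurable_const),
    Ioo_smul_setOf_inner_le, volume_cone hx, finrank_euclideanSpace_fin,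
    show ((3 : ℕ) : ENNReal) = ENNReal.ofReal 3 by simp, ← ENNReal.ofReal_mul (by norm_num)]
  ring_nf

lemma map_inner_toSphere {x : ℝ³} (hx : ‖x‖ = 1) :
    (volume : Measure ℝ³).toSphere.map (fun z : sphere (0 : ℝ³) 1 => ⟪x, (z : ℝ³)⟫) =
      ENNReal.ofReal (2 * π) • volume.restrict (Icc (-1) 1) := by
  refine Measure.ext_of_Iic _ _ fun s => ?_
  have hIcc : Iic s ∩ Icc (-1) 1 = Icc (-1) (min s 1) := by
    ext t
    simp only [mem_inter_iff, mem_Iic, mem_Icc, le_min_iff]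
    tauto
  rw [Measure.map_apply (by fun_prop) measurableSet_Iic, Measure.smul_apply,
    Measure.restrict_apply measurableSet_Iic, hIcc, Real.volume_Icc, smul_eq_mul,
    ← ENNReal.ofReal_mul (by positivity), sub_neg_eq_add, add_comm (min s 1)]
  exact toSphere_setOf_inner_le hx s

lemma integral_comp_inner_sphereHaar {x : ℝ³} (hx : ‖x‖ = 1) {G : ℝ → ℝ} (hG : Measurable G) :
    ∫ z, G ⟪x, (z : ℝ³)⟫ ∂sphereHaar 3 = (∫ t in (-1 : ℝ)..1, G t) / 2 := by
  have huniv : (volume : Measure ℝ³).toSphere univ = ENNReal.ofReal (4 * π) := by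
    rw [Measure.toSphere_apply_univ, EuclideanSpace.volume_ball_fin_three,
      finrank_euclideanSpace_fin]
    simp only [ENNReal.ofReal_one, one_pow, one_mul]
    rw [show ((3 : ℕ) : ENNReal) = ENNReal.ofReal 3 by simp, ← ENNReal.ofReal_mul (by norm_num)]
    ring_nf
  rw [sphereHaar, integral_smul_measure, huniv,
    ← integral_map (by fun_prop) hG.aestronglyMeasurable, map_inner_toSphere hx,
    integral_smul_measure, integral_Icc_eq_integral_Ioc,
    ← intervalIntegral.integral_of_le (by norm_num), smul_smul, ENNReal.toReal_inv,
    ENNReal.toReal_ofReal (by positivity), ENNReal.toReal_ofReal (by positivity), smul_eq_mul]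
  field_simp
  ring

lemma norm_sub_smul_rpow_eq {E : Type*} [NormedAddCommGroup E] [InnerProductSpace ℝ E]
    {x z : E} (hx : ‖x‖ = 1) (hz : ‖z‖ = 1) (a p : ℝ) :
    ‖x - a • z‖ ^ p = (1 + a ^ 2 - 2 * a * ⟪x, z⟫) ^ (p / 2) := by
  have hsq : ‖x - a • z‖ ^ 2 = 1 + a ^ 2 - 2 * a * ⟪x, z⟫ := by
    rw [norm_sub_sq_real, inner_smul_right, norm_smul, hx, hz, Real.norm_eq_abs, mul_one, sq_abs]
    ring
  rw [← hsq, ← Real.rpow_natCast, ← Real.rpow_mul (norm_nonneg _)]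
  norm_num [mul_div_cancel₀]

lemma integral_one_add_sq_sub_mul_rpow {a p : ℝ} (ha : 0 < a) (hp : 0 ≤ p) :
    ∫ t in (-1 : ℝ)..1, (1 + a ^ 2 - 2 * a * t) ^ (p / 2) =
      ((1 + a) ^ (p + 2) - |1 - a| ^ (p + 2)) / (a * (p + 2)) := by
  have hbase (t : ℝ) : HasDerivAt (fun t => 1 + a ^ 2 - 2 * a * t) (-(2 * a)) t := by
    simpa using ((hasDerivAt_id t).const_mul (2 * a)).const_sub (1 + a ^ 2)
  have hderiv (t : ℝ) : HasDerivAt (fun t => -(1 + a ^ 2 - 2 * a * t) ^ (p / 2 + 1) / (a * (p + 2)))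
      ((1 + a ^ 2 - 2 * a * t) ^ (p / 2)) t := by
    refine (((hbase t).rpow_const (p := p / 2 + 1) (Or.inr (by linarith))).neg.div_const
      (a * (p + 2))).congr_deriv ?_
    rw [add_sub_cancel_right]
    field_simp
  have hcont : Continuous fun t : ℝ => (1 + a ^ 2 - 2 * a * t) ^ (p / 2) :=
    (by fun_prop : Continuous fun t : ℝ => 1 + a ^ 2 - 2 * a * t).rpow_const
      fun _ => Or.inr (by positivity)
  rw [intervalIntegral.integral_eq_sub_of_hasDerivAt (fun t _ => hderiv t)
    (hcont.intervalIntegrable _ _)]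
  have h1 : 1 + a ^ 2 - 2 * a * 1 = |1 - a| ^ 2 := by rw [sq_abs]; ring
  have h2 : 1 + a ^ 2 - 2 * a * -1 = (1 + a) ^ 2 := by ring
  rw [h1, h2, ← Real.rpow_natCast, ← Real.rpow_natCast, ← Real.rpow_mul (abs_nonneg _),
    ← Real.rpow_mul (by linarith : (0 : ℝ) ≤ 1 + a)]
  ring_nf

lemma le_of_hasDerivAt_nonneg {f f' : ℝ → ℝ} {a b : ℝ} (hab : a ≤ b)
    (hf : ∀ x ∈ Icc a b, HasDerivAt f (f' x) x) (hf' : ∀ x ∈ Ioo a b, 0 ≤ f' x) :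
    f a ≤ f b := by
  refine monotoneOn_of_hasDerivWithinAt_nonneg (f' := f') (convex_Icc a b)
    (fun x hx => (hf x hx).continuousAt.continuousWithinAt) (fun x hx => ?_) ?_
    (left_mem_Icc.2 hab) (right_mem_Icc.2 hab) hab
  · rw [interior_Icc] at hx ⊢
    exact (hf x (Ioo_subset_Icc_self hx)).hasDerivWithinAt
  · rwa [interior_Icc]

lemma nonneg_of_hasDerivAt2_nonpos {f f' f'' : ℝ → ℝ} {a b x : ℝ}
    (hf : ∀ x, HasDerivAt f (f' x) x) (hf' : ∀ x, HasDerivAt f' (f'' x) x)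
    (hf'' : ∀ x ∈ Ioo a b, f'' x ≤ 0) (ha : 0 ≤ f a) (hb : 0 ≤ f b) (hx : x ∈ Icc a b) :
    0 ≤ f x := by
  have hab : a ≤ b := hx.1.trans hx.2
  have hconc : ConcaveOn ℝ (Icc a b) f :=
    concaveOn_of_hasDerivWithinAt2_nonpos (convex_Icc a b)
      (fun x _ => (hf x).continuousAt.continuousWithinAt)
      (fun x _ => (hf x).hasDerivWithinAt) (fun x _ => (hf' x).hasDerivWithinAt)
      (by rwa [interior_Icc])
  exact (le_min ha hb).trans (hconc.ge_on_segment (left_mem_Icc.2 hab) (right_mem_Icc.2 hab)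
    (segment_eq_Icc hab ▸ hx))

lemma two_mul_rpow_midpoint_le {u v c : ℝ} (hu : 0 < u) (hv : 0 < v) (hc : c ≤ 0) :
    2 * ((u + v) / 2) ^ c ≤ u ^ c + v ^ c := by
  have hgm : ((u + v) / 2) ^ c ≤ u ^ (c / 2) * v ^ (c / 2) := by
    rw [← mul_rpow hu.le hv.le, show ((u + v) / 2) ^ c = (((u + v) / 2) ^ 2) ^ (c / 2) by
      rw [← rpow_natCast, ← rpow_mul (by positivity)]; ring_nf]
    exact rpow_le_rpow_of_nonpos (by positivity) (by nlinarith [sq_nonneg (u - v)]) (by linarith)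
  have hsq (w : ℝ) (hw : 0 < w) : w ^ c = (w ^ (c / 2)) ^ 2 := by
    rw [← rpow_natCast, ← rpow_mul hw.le]; ring_nf
  rw [hsq u hu, hsq v hv]
  nlinarith [sq_nonneg (u ^ (c / 2) - v ^ (c / 2))]

lemma two_mul_rpow_sub_one_mul_le {p c u : ℝ} (hp0 : 0 ≤ p) (hp1 : p ≤ 1) (hu : 0 ≤ u)
    (huc : u < c) :
    2 * p * c ^ (p - 1) * u ≤ (c + u) ^ p - (c - u) ^ p := by
  have hderiv (v : ℝ) (hv : v ∈ Icc 0 u) : HasDerivAt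
      (fun v => (c + v) ^ p - (c - v) ^ p - 2 * p * c ^ (p - 1) * v)
      (p * ((c + v) ^ (p - 1) + (c - v) ^ (p - 1)) - 2 * p * c ^ (p - 1)) v := by
    have h1 := ((hasDerivAt_id v).const_add c).rpow_const (p := p) (Or.inl (by
      simp only [id]; linarith [hv.1]))
    have h2 := ((hasDerivAt_id v).const_sub c).rpow_const (p := p) (Or.inl (by
      simp only [id]; linarith [hv.2]))
    exact ((h1.sub h2).sub ((hasDerivAt_id v).const_mul (2 * p * c ^ (p - 1)))).congr_deriv
      (by simp only [id]; ring)
  have := le_of_hasDerivAt_nonneg hu hderiv fun v hv => by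
    have hmid := two_mul_rpow_midpoint_le (u := c + v) (v := c - v) (c := p - 1)
      (by linarith [hv.1]) (by linarith [hv.2]) (by linarith)
    rw [show (c + v + (c - v)) / 2 = c by ring] at hmid
    nlinarith
  simpa using this

lemma hasDerivAt_const_mul_two_rpow (c x : ℝ) :
    HasDerivAt (fun x => c * 2 ^ x) (c * log 2 * 2 ^ x) x :=
  ((hasStrictDerivAt_const_rpow two_pos x).hasDerivAt.const_mul c).congr_deriv (by ring)

lemma mul_log_two_mul_log_two_mul_two_rpow_le {c x : ℝ} (hc : 0 ≤ c) (hx : x ∈ Ioo (0 : ℝ) 1) :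
    c * log 2 * log 2 * 2 ^ x ≤ c * (1 + x) / 2 := by
  have hlog : log 2 * log 2 < 1 / 2 := by nlinarith [log_two_lt_d9, log_two_gt_d9]
  have h2x : (2 : ℝ) ^ x ≤ 1 + x := by
    simpa [one_add_one_eq_two] using rpow_one_add_le_one_add_mul_self (s := 1) (by norm_num)
      hx.1.le hx.2.le
  have : log 2 * log 2 * 2 ^ x ≤ (1 + x) / 2 := by
    nlinarith [rpow_pos_of_pos two_pos x, mul_self_nonneg (log 2)]
  nlinarith

lemma sq_add_add_two_le_two_mul_two_rpow {p : ℝ} (hp : p ∈ Icc (0 : ℝ) 1) :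
    p ^ 2 + p + 2 ≤ 2 * 2 ^ p := by
  have := nonneg_of_hasDerivAt2_nonpos (f := fun x => 2 * 2 ^ x - (x ^ 2 + x + 2))
    (f' := fun x => 2 * log 2 * 2 ^ x - (2 * x + 1))
    (f'' := fun x => 2 * log 2 * log 2 * 2 ^ x - 2)
    (fun x => ((hasDerivAt_const_mul_two_rpow 2 x).sub
      (((hasDerivAt_pow 2 x).add (hasDerivAt_id x)).add_const 2)).congr_deriv (by simp))
    (fun x => ((hasDerivAt_const_mul_two_rpow (2 * log 2) x).sub
      (((hasDerivAt_id x).const_mul 2).add_const 1)).congr_deriv (by simp))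
    (fun x hx => by nlinarith [mul_log_two_mul_log_two_mul_two_rpow_le zero_le_two hx, hx.2])
    (by norm_num) (by norm_num) hp
  simpa using this

lemma cubic_le_four_mul_two_rpow {p : ℝ} (hp : p ∈ Icc (0 : ℝ) 1) :
    2 * p + 4 + (p ^ 3 + 3 * p ^ 2 + 2 * p) / 3 ≤ 4 * 2 ^ p := by
  have := nonneg_of_hasDerivAt2_nonpos
    (f := fun x => 4 * 2 ^ x - (2 * x + 4 + (x ^ 3 + 3 * x ^ 2 + 2 * x) / 3))
    (f' := fun x => 4 * log 2 * 2 ^ x - (2 + (3 * x ^ 2 + 6 * x + 2) / 3))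
    (f'' := fun x => 4 * log 2 * log 2 * 2 ^ x - (6 * x + 6) / 3)
    (fun x => ((hasDerivAt_const_mul_two_rpow 4 x).sub
      ((((hasDerivAt_id x).const_mul 2).add_const 4).add ((((hasDerivAt_pow 3 x).add
        ((hasDerivAt_pow 2 x).const_mul 3)).add ((hasDerivAt_id x).const_mul 2)).div_const
        3))).congr_deriv (by simp; ring))
    (fun x => ((hasDerivAt_const_mul_two_rpow (4 * log 2) x).sub
      ((((((hasDerivAt_pow 2 x).const_mul 3).add ((hasDerivAt_id x).const_mul 6)).add_const
        2).div_const 3).const_add 2)).congr_deriv (by simp; ring))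
    (fun x hx => by nlinarith [mul_log_two_mul_log_two_mul_two_rpow_le zero_le_four hx])
    (by norm_num) (by norm_num) hp
  simpa using this

lemma rpow_sub_rpow_lower_bound_of_le_one {p a : ℝ} (hp0 : 0 ≤ p) (hp1 : p ≤ 1) (ha0 : 0 ≤ a)
    (ha1 : a ≤ 1) :
    2 * (p + 2) * a + (p + 2) * (p + 1) * p / 3 * a ^ 3 ≤
      (1 + a) ^ (p + 2) - (1 - a) ^ (p + 2) := by
  have hd (r B : ℝ) (hr : 1 ≤ r) : HasDerivAt (fun A => (1 + A) ^ r + (1 - A) ^ r)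
      (r * ((1 + B) ^ (r - 1) - (1 - B) ^ (r - 1))) B :=
    ((((hasDerivAt_id B).const_add 1).rpow_const (Or.inr hr)).add
      (((hasDerivAt_id B).const_sub 1).rpow_const (Or.inr hr))).congr_deriv (by simp; ring)
  have hd' (r B : ℝ) (hr : 1 ≤ r) : HasDerivAt (fun A => (1 + A) ^ r - (1 - A) ^ r)
      (r * ((1 + B) ^ (r - 1) + (1 - B) ^ (r - 1))) B :=
    ((((hasDerivAt_id B).const_add 1).rpow_const (Or.inr hr)).sub
      (((hasDerivAt_id B).const_sub 1).rpow_const (Or.inr hr))).congr_deriv (by simp; ring)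
  have hsecond (A : ℝ) (hA : A ∈ Ico (0 : ℝ) 1) :
      0 ≤ (p + 2) * ((1 + A) ^ (p + 1) + (1 - A) ^ (p + 1)) - 2 * (p + 2) -
        (p + 2) * (p + 1) * p * A ^ 2 := by
    have := le_of_hasDerivAt_nonneg hA.1
      (f := fun A => (p + 2) * ((1 + A) ^ (p + 1) + (1 - A) ^ (p + 1)) - 2 * (p + 2) -
        (p + 2) * (p + 1) * p * A ^ 2)
      (f' := fun B => (p + 2) * (p + 1) * ((1 + B) ^ p - (1 - B) ^ p - 2 * p * B))
      (fun B _ => ((((hd (p + 1) B (by linarith)).const_mul (p + 2)).sub_const _).sub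
        ((hasDerivAt_pow 2 B).const_mul _)).congr_deriv (by simp; ring))
      (fun B hB => mul_nonneg (by positivity) (by
        have := two_mul_rpow_sub_one_mul_le hp0 hp1 hB.1.le (hB.2.trans hA.2)
        rw [one_rpow] at this
        linarith))
    simp only [add_zero, one_rpow, sub_zero, zero_pow two_ne_zero, mul_zero,
      tsub_le_iff_right] at this
    linarith
  have := le_of_hasDerivAt_nonneg ha0
    (f := fun A => (1 + A) ^ (p + 2) - (1 - A) ^ (p + 2) - 2 * (p + 2) * A -
      (p + 2) * (p + 1) * p / 3 * A ^ 3)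
    (f' := fun B => (p + 2) * ((1 + B) ^ (p + 1) + (1 - B) ^ (p + 1)) - 2 * (p + 2) -
        (p + 2) * (p + 1) * p * B ^ 2)
    (fun B _ => (((hd' (p + 2) B (by linarith)).sub ((hasDerivAt_id B).const_mul _)).sub
      ((hasDerivAt_pow 3 B).const_mul _)).congr_deriv
      (by rw [show p + 2 - 1 = p + 1 by ring]; simp; ring))
    (fun B hB => hsecond B ⟨hB.1.le, hB.2.trans_le ha1⟩)
  simp only [add_zero, one_rpow, sub_zero, sub_self, mul_zero, zero_pow three_ne_zero,
    sub_nonneg] at this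
  linarith

lemma rpow_sub_rpow_lower_bound_of_one_le {p a : ℝ} (hp0 : 0 ≤ p) (hp1 : p ≤ 1) (ha : 1 ≤ a) :
    2 * (p + 2) * a ^ (p + 1) + 2 * (p + 2) * p * (2 - p) / 3 - (p + 2) * p * (1 - p) * a ≤
      (1 + a) ^ (p + 2) - (a - 1) ^ (p + 2) := by
  have hd (r B : ℝ) (hr : 1 ≤ r) : HasDerivAt (fun A => (1 + A) ^ r - (A - 1) ^ r)
      (r * ((1 + B) ^ (r - 1) - (B - 1) ^ (r - 1))) B :=
    ((((hasDerivAt_id B).const_add 1).rpow_const (Or.inr hr)).sub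
      (((hasDerivAt_id B).sub_const 1).rpow_const (Or.inr hr))).congr_deriv (by simp; ring)
  have hfirst (A : ℝ) (hA : 1 ≤ A) :
      0 ≤ (1 + A) ^ (p + 1) - (A - 1) ^ (p + 1) - 2 * (p + 1) * A ^ p + p * (1 - p) := by
    have := le_of_hasDerivAt_nonneg hA
      (f := fun A => (1 + A) ^ (p + 1) - (A - 1) ^ (p + 1) - 2 * (p + 1) * A ^ p + p * (1 - p))
      (f' := fun B => (p + 1) * ((1 + B) ^ p - (B - 1) ^ p - 2 * p * B ^ (p - 1)))
      (fun B hB => (((hd (p + 1) B (by linarith)).sub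
        ((hasDerivAt_rpow_const (Or.inl (by linarith [hB.1]))).const_mul _)).add_const
        _).congr_deriv (by simp; ring))
      (fun B hB => mul_nonneg (by positivity) (by
        have := two_mul_rpow_sub_one_mul_le hp0 hp1 zero_le_one hB.1
        rw [add_comm B] at this
        linarith))
    have h1 := sq_add_add_two_le_two_mul_two_rpow ⟨hp0, hp1⟩
    rw [show (1 : ℝ) + 1 = 2 by norm_num, rpow_add_one two_ne_zero] at this
    simp only [sub_self, zero_rpow (by linarith : p + 1 ≠ 0), sub_zero, one_rpow, mul_one,
      add_le_add_iff_right, tsub_le_iff_right] at this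
    linarith
  have := le_of_hasDerivAt_nonneg ha
    (f := fun A => (1 + A) ^ (p + 2) - (A - 1) ^ (p + 2) - 2 * (p + 2) * A ^ (p + 1) -
      2 * (p + 2) * p * (2 - p) / 3 + (p + 2) * p * (1 - p) * A)
    (f' := fun B => (p + 2) *
      ((1 + B) ^ (p + 1) - (B - 1) ^ (p + 1) - 2 * (p + 1) * B ^ p + p * (1 - p)))
    (fun B hB => ((((hd (p + 2) B (by linarith)).sub
      ((hasDerivAt_rpow_const (Or.inr (by linarith))).const_mul _)).sub_const _).add
      ((hasDerivAt_id B).const_mul _)).congr_deriv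
      (by rw [show p + 2 - 1 = p + 1 by ring]; simp; ring))
    (fun B hB => mul_nonneg (by positivity) (hfirst B hB.1.le))
  have h1 := cubic_le_four_mul_two_rpow ⟨hp0, hp1⟩
  rw [show (1 : ℝ) + 1 = 2 by norm_num, rpow_add two_pos, rpow_two] at this
  norm_num [zero_rpow (by linarith : p + 2 ≠ 0)] at this
  linarith

lemma integral_norm_sub_smul_rpow_sphereHaar {x : ℝ³} (hx : ‖x‖ = 1) {a p : ℝ} (ha : 0 < a)
    (hp : 0 ≤ p) :
    ∫ z, ‖x - a • (z : ℝ³)‖ ^ p ∂sphereHaar 3 =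
      ((1 + a) ^ (p + 2) - |1 - a| ^ (p + 2)) / (2 * a * (p + 2)) := by
  calc ∫ z, ‖x - a • (z : ℝ³)‖ ^ p ∂sphereHaar 3
      = ∫ z, (1 + a ^ 2 - 2 * a * ⟪x, (z : ℝ³)⟫) ^ (p / 2) ∂sphereHaar 3 :=
        integral_congr_ae <| ae_of_all _ fun z =>
          norm_sub_smul_rpow_eq hx (norm_eq_of_mem_sphere z) a p
    _ = ((1 + a) ^ (p + 2) - |1 - a| ^ (p + 2)) / (2 * a * (p + 2)) := by
        rw [integral_comp_inner_sphereHaar hx (G := fun t => (1 + a ^ 2 - 2 * a * t) ^ (p / 2))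
          (by fun_prop), integral_one_add_sq_sub_mul_rpow ha hp]
        field_simp

theorem stmt_6 (p : ℝ) (hp : p ∈ Set.Ioc (0 : ℝ) 1) (x : EuclideanSpace ℝ (Fin 3)) (hx : ‖x‖ = 1)
    (a : ℝ) (ha : 0 ≤ a) :
    (a ≤ 1 → 1 + p * (p + 1) / 6 * a ^ 2 ≤
      ∫ z : sphere (0 : EuclideanSpace ℝ (Fin 3)) 1,
        ‖x - a • (z : EuclideanSpace ℝ (Fin 3))‖ ^ p ∂(sphereHaar 3)) ∧
    (1 < a → a ^ p + p * (2 - p) / (3 * a) - p * (1 - p) / 2 ≤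
      ∫ z : sphere (0 : EuclideanSpace ℝ (Fin 3)) 1,
        ‖x - a • (z : EuclideanSpace ℝ (Fin 3))‖ ^ p ∂(sphereHaar 3)) := by
  obtain ⟨hp0, hp1⟩ := hp
  refine ⟨fun ha1 => ?_, fun ha1 => ?_⟩
  · rcases ha.eq_or_lt with rfl | ha0
    · simp [hx]
    rw [integral_norm_sub_smul_rpow_sphereHaar hx ha0 hp0.le, abs_of_nonneg (by linarith),
      le_div_iff₀ (by positivity)]
    linear_combination rpow_sub_rpow_lower_bound_of_le_one hp0.le hp1 ha0.le ha1
  · have ha0 : 0 < a := by linarith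
    have key := rpow_sub_rpow_lower_bound_of_one_le hp0.le hp1 ha1.le
    rw [rpow_add_one ha0.ne'] at key
    rw [integral_norm_sub_smul_rpow_sphereHaar hx ha0 hp0.le, abs_of_neg (by linarith), neg_sub,
      le_div_iff₀ (by positivity)]
    have hexpand : (a ^ p + p * (2 - p) / (3 * a) - p * (1 - p) / 2) * (2 * a * (p + 2)) =
        2 * (p + 2) * (a ^ p * a) + 2 * (p + 2) * p * (2 - p) / 3 - (p + 2) * p * (1 - p) * a := by
      field_simp
    linarith
end

section
/- Let p ∈ (0,1]. Then for every t with 1 ≤ t ≤ 3/(2-p), t^{p/2} + p(2-p)/(3√t) - p(1-p)/2 ≥ (1 + ((p+1)/3) t)^{p/2}. -/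
/-!
By concavity of `x ↦ x ^ (p / 2)`, the left side is at most the tangent line at `t`,
`t ^ (p / 2) + (p / 2) t ^ (p / 2 - 1) ((p - 2) t / 3 + 1)`, and the bound `t ≤ 3 / (2 - p)` makes
the increment nonnegative, so `t ^ (p / 2 - 1) ≤ t ^ (-1 / 2)` may be used. With `s = √t` what
remains is the polynomial inequality `(s - 1) ((2 - p) s + 2 p - 1) ≥ 0`.
-/

open Real

theorem Real.rpow_le_rpow_add_mul_rpow_sub_one_mul_sub {x y r : ℝ} (hx : 0 < x) (hy : 0 ≤ y)
    (hr0 : 0 ≤ r) (hr1 : r ≤ 1) :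
    y ^ r ≤ x ^ r + r * x ^ (r - 1) * (y - x) := by
  have hbernoulli : (1 + (y - x) / x) ^ r ≤ 1 + r * ((y - x) / x) :=
    rpow_one_add_le_one_add_mul_self (by rw [le_div_iff₀ hx]; linarith) hr0 hr1
  rw [one_add_div hx.ne', add_sub_cancel, div_rpow hy hx.le, div_le_iff₀ (by positivity)]
    at hbernoulli
  rw [rpow_sub_one hx.ne']
  calc y ^ r ≤ (1 + r * ((y - x) / x)) * x ^ r := hbernoulli
    _ = x ^ r + r * (x ^ r / x) * (y - x) := by field_simp

theorem Real.rpow_sub_one_le_inv_sqrt {x r : ℝ} (hx : 1 ≤ x) (hr : r ≤ 1 / 2) :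
    x ^ (r - 1) ≤ (√x)⁻¹ := by
  rw [sqrt_eq_rpow, ← rpow_neg (by linarith)]
  exact rpow_le_rpow_of_exponent_le hx (by linarith)

theorem tangent_increment_le {p t : ℝ} (hp0 : 0 ≤ p) (hp2 : p ≤ 2) (ht : 1 ≤ t) :
    p / 2 * (√t)⁻¹ * (1 + (p + 1) / 3 * t - t) ≤ p * (2 - p) / (3 * √t) - p * (1 - p) / 2 := by
  obtain ⟨s, hs1, rfl⟩ : ∃ s, 1 ≤ s ∧ t = s ^ 2 :=
    ⟨√t, one_le_sqrt.mpr ht, (sq_sqrt (by linarith)).symm⟩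
  rw [sqrt_sq (by linarith)]
  have key : p * (2 - p) / (3 * s) - p * (1 - p) / 2
      - p / 2 * s⁻¹ * (1 + (p + 1) / 3 * s ^ 2 - s ^ 2)
      = p * ((s - 1) * ((2 - p) * s + (2 * p - 1))) / (6 * s) := by
    field_simp; ring
  have hnonneg : 0 ≤ p * ((s - 1) * ((2 - p) * s + (2 * p - 1))) / (6 * s) := by
    have : 0 ≤ (2 - p) * s + (2 * p - 1) := by nlinarith
    positivity
  linarith

theorem stmt_7 (p : ℝ) (hp : p ∈ Set.Ioc (0 : ℝ) 1) (t : ℝ) (ht1 : 1 ≤ t)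
    (ht2 : t ≤ 3 / (2 - p)) :
    (1 + (p + 1) / 3 * t) ^ (p / 2) ≤
      t ^ (p / 2) + p * (2 - p) / (3 * Real.sqrt t) - p * (1 - p) / 2 := by
  obtain ⟨hp0, hp1⟩ := hp
  have hincr : 0 ≤ 1 + (p + 1) / 3 * t - t := by
    have := (le_div_iff₀ (by linarith : (0 : ℝ) < 2 - p)).mp ht2
    linarith
  calc (1 + (p + 1) / 3 * t) ^ (p / 2)
      ≤ t ^ (p / 2) + p / 2 * t ^ (p / 2 - 1) * (1 + (p + 1) / 3 * t - t) :=
        rpow_le_rpow_add_mul_rpow_sub_one_mul_sub (by linarith) (by positivity)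
          (by linarith) (by linarith)
    _ ≤ t ^ (p / 2) + p / 2 * (√t)⁻¹ * (1 + (p + 1) / 3 * t - t) := by
        gcongr
        exact rpow_sub_one_le_inv_sqrt ht1 (by linarith)
    _ ≤ t ^ (p / 2) + p * (2 - p) / (3 * √t) - p * (1 - p) / 2 := by
        linarith [tangent_increment_le hp0.le (by linarith) ht1]
end

section
/- Let x, y ∈ ℝ with 0 < y ≤ x ≤ 1 and y < 1. Then the function q ↦ x^q (1 - y + q(1-x)(x-y)) is nonincreasing on [0,∞). -/
/-!
Differentiating, `d/dq [x ^ q * (a + q * b)] = x ^ q * (log x * (a + q * b) + b)`. For `0 < x ≤ 1`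
and `b ≥ 0` the bracket is largest at `q = 0`, so the function decreases on `[0, ∞)` as soon as
`b ≤ -a log x`. For `a = 1 - y`, `b = (1 - x)(x - y)` this follows from `x - y ≤ 1 - y` and
`1 - x ≤ -log x`.
-/

open Real Set

lemma hasDerivAt_rpow_mul_affine {x : ℝ} (hx : 0 < x) (a b q : ℝ) :
    HasDerivAt (fun q : ℝ => x ^ q * (a + q * b)) (x ^ q * (log x * (a + q * b) + b)) q := by
  have hpow : HasDerivAt (fun q : ℝ => x ^ q) (x ^ q * log x) q := by
    simpa using (hasDerivAt_const q x).rpow (hasDerivAt_id q) hx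
  have haff : HasDerivAt (fun q : ℝ => a + q * b) b q := by
    simpa using ((hasDerivAt_id q).mul_const b).const_add a
  exact (hpow.mul haff).congr_deriv (by ring)

lemma antitoneOn_rpow_mul_affine {x a b : ℝ} (hx0 : 0 < x) (hx1 : x ≤ 1) (hb : 0 ≤ b)
    (hab : b ≤ -(a * log x)) :
    AntitoneOn (fun q : ℝ => x ^ q * (a + q * b)) (Ici 0) := by
  have hderiv := hasDerivAt_rpow_mul_affine hx0 a b
  refine antitoneOn_of_hasDerivWithinAt_nonpos (convex_Ici 0)
    (fun q _ => (hderiv q).continuousAt.continuousWithinAt)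
    (fun q _ => (hderiv q).hasDerivWithinAt) fun q hq => ?_
  rw [interior_Ici, mem_Ioi] at hq
  have hlog : log x ≤ 0 := log_nonpos hx0.le hx1
  have hbracket : log x * (a + q * b) + b ≤ 0 := by
    nlinarith [mul_nonneg hq.le hb]
  exact mul_nonpos_of_nonneg_of_nonpos (rpow_pos_of_pos hx0 q).le hbracket

theorem stmt_9_general (x y : ℝ) (hy0 : 0 < y) (hyx : y ≤ x) (hx1 : x ≤ 1) :
    AntitoneOn (fun q : ℝ => x ^ q * (1 - y + q * (1 - x) * (x - y))) (Set.Ici 0) := by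
  have hx0 : 0 < x := hy0.trans_le hyx
  have hb : 0 ≤ (1 - x) * (x - y) := mul_nonneg (sub_nonneg.2 hx1) (sub_nonneg.2 hyx)
  have hab : (1 - x) * (x - y) ≤ -((1 - y) * log x) := by
    have hlog : 1 - x ≤ -log x := by linarith [log_le_sub_one_of_pos hx0]
    calc (1 - x) * (x - y) ≤ (1 - x) * (1 - y) := by gcongr
      _ ≤ -log x * (1 - y) := by gcongr; linarith
      _ = -((1 - y) * log x) := by ring
  simpa only [mul_assoc] using antitoneOn_rpow_mul_affine hx0 hx1 hb hab

theorem stmt_9 (x y : ℝ) (hy0 : 0 < y) (hyx : y ≤ x) (hx1 : x ≤ 1) (hy1 : y < 1) :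
    AntitoneOn (fun q : ℝ => x ^ q * (1 - y + q * (1 - x) * (x - y))) (Set.Ici 0) :=
  stmt_9_general x y hy0 hyx hx1
end

section
/- Let q ∈ [1,2] and let x, y ∈ ℝ with 1/2 ≤ y ≤ x ≤ 1. Then x^q (1 - y + q(1-x)(x-y)) ≥ 1 - y - (1-y²)(1-x). -/
/-!
Bernoulli's inequality with the nonpositive exponent `q - 2` gives
`x ^ q ≥ x ^ 2 * (1 + (2 - q) * (1 - x))`. With `x ^ q` replaced by this lower bound, the
difference of the two sides is a polynomial that splits as a sum of products of factors that are
visibly nonnegative when `1/2 ≤ y ≤ x ≤ 1` and `0 ≤ q ≤ 2`.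
-/

open Real

lemma one_add_mul_sub_one_le_rpow_of_nonpos {x r : ℝ} (hx : 0 < x) (hr : r ≤ 0) :
    1 + r * (x - 1) ≤ x ^ r :=
  calc 1 + r * (x - 1) ≤ 1 + r * log x :=
        add_le_add_right (mul_le_mul_of_nonpos_left (log_le_sub_one_of_pos hx) hr) 1
    _ ≤ exp (log x * r) := by rw [add_comm, mul_comm]; exact add_one_le_exp _
    _ = x ^ r := (rpow_def_of_pos hx r).symm

lemma sq_mul_one_add_le_rpow {x q : ℝ} (hx : 0 < x) (hq : q ≤ 2) :
    x ^ 2 * (1 + (2 - q) * (1 - x)) ≤ x ^ q := by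
  have h := one_add_mul_sub_one_le_rpow_of_nonpos hx (sub_nonpos.mpr hq)
  calc x ^ 2 * (1 + (2 - q) * (1 - x)) = x ^ (2 : ℝ) * (1 + (q - 2) * (x - 1)) := by
        rw [rpow_two]; ring
    _ ≤ x ^ (2 : ℝ) * x ^ (q - 2) := by gcongr
    _ = x ^ q := by rw [← rpow_add hx, add_sub_cancel]

lemma le_sq_mul_one_add_mul_of_half_le {q x y : ℝ} (hq0 : 0 ≤ q) (hq2 : q ≤ 2)
    (hy : 1 / 2 ≤ y) (hyx : y ≤ x) (hx : x ≤ 1) :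
    1 - y - (1 - y ^ 2) * (1 - x) ≤
      x ^ 2 * (1 + (2 - q) * (1 - x)) * (1 - y + q * (1 - x) * (x - y)) := by
  have hxy : 0 ≤ x - y := sub_nonneg.mpr hyx
  have h₁ : 0 ≤ (2 - q) * (1 - x) ^ 2 * x ^ 2 * (1 + q * (x - y)) := by
    have : 0 ≤ 1 + q * (x - y) := by positivity
    have : 0 ≤ 2 - q := by linarith
    positivity
  have h₂ : 0 ≤ (1 - x) * (x - y) * (2 * x ^ 2 + y - 1) :=
    mul_nonneg (mul_nonneg (by linarith) hxy) (by nlinarith)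
  have key : x ^ 2 * (1 + (2 - q) * (1 - x)) * (1 - y + q * (1 - x) * (x - y))
      - (1 - y - (1 - y ^ 2) * (1 - x))
      = (2 - q) * (1 - x) ^ 2 * x ^ 2 * (1 + q * (x - y))
        + (1 - x) * (x - y) * (2 * x ^ 2 + y - 1) := by
    ring
  linarith

theorem stmt_10 (q : ℝ) (hq : q ∈ Set.Icc (1 : ℝ) 2) (x y : ℝ) (hy : 1 / 2 ≤ y)
    (hyx : y ≤ x) (hx : x ≤ 1) :
    1 - y - (1 - y ^ 2) * (1 - x) ≤ x ^ q * (1 - y + q * (1 - x) * (x - y)) := by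
  obtain ⟨hq1, hq2⟩ := hq
  have hA : 0 ≤ 1 - y + q * (1 - x) * (x - y) := by
    have : 0 ≤ q * (1 - x) * (x - y) :=
      mul_nonneg (mul_nonneg (by linarith) (by linarith)) (by linarith)
    linarith
  calc 1 - y - (1 - y ^ 2) * (1 - x)
      ≤ x ^ 2 * (1 + (2 - q) * (1 - x)) * (1 - y + q * (1 - x) * (x - y)) :=
        le_sq_mul_one_add_mul_of_half_le (by linarith) hq2 hy hyx hx
    _ ≤ x ^ q * (1 - y + q * (1 - x) * (x - y)) :=
        mul_le_mul_of_nonneg_right (sq_mul_one_add_le_rpow (by linarith) hq2) hA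
end
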